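/- Let A be a commutative unital ℂ-algebra, g a complex simple Lie algebra, λ a dominant integral weight, and W_A(λ) the g⊗A-module generated by w_λ with relations (n⁺⊗A)w_λ = 0, h·w_λ = λ(h)w_λ for h ∈ h, and (x_i⁻)^{λ(h_i)+1} w_λ = 0 for all i. Then the formula (u w_λ)·(h⊗a) := u (h⊗a) w_λ, for u ∈ U(g⊗A), h ∈ h, a ∈ A, gives a well-defined right U(h⊗A)-module structure on W_A(λ) commuting with the left g⊗A-action. -/

import Mathlib

/-!
Right multiplication by `y = ι(a ⊗ h)` is left `U(g ⊗ A)`-linear, so it suffices to show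
`r * y ∈ I_λ` for each defining relation `r`. Commuting `y` past `r` leaves a correction term.
For `r = ι(b ⊗ x)` with `x ∈ n⁺` it is `ι(ba ⊗ [x, h])`, again a relation because `n⁺`, being
generated by `ad h`-eigenvectors, is `ad h`-stable. For `r = ι(1 ⊗ h') - λ(h')` it vanishes,
since a Cartan subalgebra of a simple Lie algebra is abelian (Cartan's criterion).
For `r = f^(m+1)` with `f = ι(1 ⊗ x_i⁻)` it is a multiple of `f_a f^m`, `f_a = ι(a ⊗ x_i⁻)`.
With `e_a = ι(a ⊗ x_i⁺)` and `h_a = ι(a ⊗ h_i)` one has the Garland-type identity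
`f (e_a f^(m+1) - f^(m+1) e_a) = (m+1) h_a f^(m+1) + (m+1)(m+2) f_a f^m`, in which the left side
and the first term on the right lie in `I_λ`; hence so does `f_a f^m`.
-/

open TensorProduct

/-- The current Lie algebra `g ⊗ A` (realized as `A ⊗[ℂ] g`) is a complex Lie algebra. -/
noncomputable instance currentLieAlgebra (A : Type*) [CommRing A] [Algebra ℂ A]
    (g : Type*) [LieRing g] [LieAlgebra ℂ g] : LieAlgebra ℂ (A ⊗[ℂ] g) where
  lie_smul t x y := by
    rw [← algebraMap_smul A t y, lie_smul, algebraMap_smul]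

/-- The set of defining relations of the global Weyl module `W_A(λ)`, inside the
universal enveloping algebra of `g ⊗ A`: the elements `x ⊗ a` for `x ∈ n⁺`, the
elements `h ⊗ 1 − λ(h)` for `h` in the Cartan subalgebra `H`, and the powers
`(x_i⁻ ⊗ 1)^{λ(h_i)+1}`.  The global Weyl module is the quotient of `U(g ⊗ A)` by
the left ideal generated by this set. -/
noncomputable def weylRels (A : Type*) [CommRing A] [Algebra ℂ A]
    {g : Type*} [LieRing g] [LieAlgebra ℂ g] (H : LieSubalgebra ℂ g)
    (npos : LieSubalgebra ℂ g) (lam : Module.Dual ℂ H)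
    {n : ℕ} (xm : Fin n → g) (m : Fin n → ℕ) :
    Set (UniversalEnvelopingAlgebra ℂ (A ⊗[ℂ] g)) :=
  {u | ∃ x ∈ npos, ∃ a : A, u = UniversalEnvelopingAlgebra.ι ℂ (a ⊗ₜ[ℂ] x)} ∪
  {u | ∃ h : H, u = UniversalEnvelopingAlgebra.ι ℂ ((1 : A) ⊗ₜ[ℂ] (h : g)) -
        algebraMap ℂ _ (lam h)} ∪
  {u | ∃ i, u = (UniversalEnvelopingAlgebra.ι ℂ ((1 : A) ⊗ₜ[ℂ] xm i)) ^ (m i + 1)}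

noncomputable def weylIdeal (A : Type*) [CommRing A] [Algebra ℂ A]
    {g : Type*} [LieRing g] [LieAlgebra ℂ g] (H : LieSubalgebra ℂ g)
    (npos : LieSubalgebra ℂ g) (lam : Module.Dual ℂ H)
    {n : ℕ} (xm : Fin n → g) (m : Fin n → ℕ) :
    Submodule (UniversalEnvelopingAlgebra ℂ (A ⊗[ℂ] g))
      (UniversalEnvelopingAlgebra ℂ (A ⊗[ℂ] g)) :=
  Submodule.span _ (weylRels A H npos lam xm m)

section RingIdentities

variable {R : Type*} [Ring R]

theorem pow_succ_mul_eq_of_mul_eq_add {f z w : R} (hfz : f * z = z * f + w)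
    (hfw : Commute f w) (n : ℕ) :
    f ^ (n + 1) * z = z * f ^ (n + 1) + (n + 1) • (w * f ^ n) := by
  induction n with
  | zero => simpa using hfz
  | succ n ih =>
    calc f ^ (n + 2) * z = f * (f ^ (n + 1) * z) := by rw [← mul_assoc, ← pow_succ']
      _ = (z * f + w) * f ^ (n + 1) + (n + 1) • (w * f * f ^ n) := by
          rw [ih, mul_add, mul_smul_comm, ← mul_assoc, ← mul_assoc, hfz, hfw.eq]
      _ = z * f ^ (n + 2) + (n + 2) • (w * f ^ (n + 1)) := by
          rw [add_mul, mul_assoc, mul_assoc, ← pow_succ', ← pow_succ', succ_nsmul _ (n + 1)]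
          abel

theorem mul_commutator_pow_succ_eq {e f h fa : R} (hef : e * f = f * e + h)
    (hfh : f * h = h * f + 2 • fa) (hff : Commute f fa) (n : ℕ) :
    f * (e * f ^ (n + 1) - f ^ (n + 1) * e) =
      (n + 1) • (h * f ^ (n + 1)) + ((n + 1) * (n + 2)) • (fa * f ^ n) := by
  induction n with
  | zero => simp [hef, hfh]
  | succ n ih =>
    have hstep : e * f ^ (n + 2) - f ^ (n + 2) * e =
        (e * f ^ (n + 1) - f ^ (n + 1) * e) * f + f ^ (n + 1) * h := by
      rw [eq_sub_of_add_eq' hef.symm, pow_succ _ (n + 1)]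
      noncomm_ring
    have hpow := pow_succ_mul_eq_of_mul_eq_add hfh (hff.smul_right 2) (n + 1)
    rw [hstep, mul_add, ← mul_assoc, ih, ← mul_assoc, ← pow_succ', hpow]
    simp only [add_mul, smul_mul_assoc, mul_assoc, ← pow_succ]
    module

theorem nsmul_mul_pow_mem_of_pow_succ_mem (I : Submodule R R) {e f h fa : R}
    (hef : e * f = f * e + h) (hfh : f * h = h * f + 2 • fa) (hff : Commute f fa) {n : ℕ}
    (he : e ∈ I) (hf : f ^ (n + 1) ∈ I) : ((n + 1) * (n + 2)) • (fa * f ^ n) ∈ I := by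
  have hcomm : f * (e * f ^ (n + 1) - f ^ (n + 1) * e) ∈ I :=
    I.smul_mem f (I.sub_mem (I.smul_mem e hf) (I.smul_mem _ he))
  rw [mul_commutator_pow_succ_eq hef hfh hff] at hcomm
  exact (I.add_mem_iff_right (I.smul_of_tower_mem _ (I.smul_mem h hf))).mp hcomm

theorem mul_pow_mem_of_pow_succ_mem {K : Type*} [Field K] [CharZero K] [Algebra K R]
    (I : Submodule R R) {e f h fa : R}
    (hef : e * f = f * e + h) (hfh : f * h = h * f + 2 • fa) (hff : Commute f fa) {n : ℕ}
    (he : e ∈ I) (hf : f ^ (n + 1) ∈ I) : fa * f ^ n ∈ I := by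
  have hmem := nsmul_mul_pow_mem_of_pow_succ_mem I hef hfh hff he hf
  rw [← Nat.cast_smul_eq_nsmul K] at hmem
  have hne : (((n + 1) * (n + 2) : ℕ) : K) ≠ 0 := Nat.cast_ne_zero.mpr (by positivity)
  simpa only [smul_smul, inv_mul_cancel₀ hne, one_smul] using
    I.smul_of_tower_mem (((n + 1) * (n + 2) : ℕ) : K)⁻¹ hmem

end RingIdentities

theorem Submodule.mul_mem_span_of_forall_mul_mem {R : Type*} [Ring R] {S : Set R} {y : R}
    (hS : ∀ s ∈ S, s * y ∈ span R S) {x : R} (hx : x ∈ span R S) : x * y ∈ span R S :=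
  (span_le (p := (span R S).comap (LinearMap.toSpanSingleton R R y))).mpr hS hx

theorem LieSubalgebra.lie_mem_lieSpan {R L : Type*} [CommRing R] [LieRing L] [LieAlgebra R L]
    {S : Set L} {x : L} (hS : ∀ s ∈ S, ⁅x, s⁆ ∈ lieSpan R L S) {y : L}
    (hy : y ∈ lieSpan R L S) : ⁅x, y⁆ ∈ lieSpan R L S := by
  induction hy using lieSpan_induction with
  | mem s hs => exact hS s hs
  | zero => simp
  | add y z _ _ hy hz => rw [lie_add]; exact add_mem hy hz
  | smul t y _ hy => rw [lie_smul]; exact SMulMemClass.smul_mem t hy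
  | lie y z hy' hz' hy hz =>
    rw [leibniz_lie]
    exact add_mem (lie_mem _ hy hz') (lie_mem _ hy' hz)

open UniversalEnvelopingAlgebra

theorem UniversalEnvelopingAlgebra.ι_mul_ι (R : Type*) {L : Type*} [CommRing R] [LieRing L]
    [LieAlgebra R L] (x y : L) : ι R x * ι R y = ι R y * ι R x + ι R ⁅x, y⁆ := by
  let := LieRing.ofAssociativeRing (A := UniversalEnvelopingAlgebra R L)
  rw [LieHom.map_lie, Ring.lie_def]
  abel

section CurrentAlgebra

variable {A : Type*} [CommRing A] [Algebra ℂ A] {g : Type*} [LieRing g] [LieAlgebra ℂ g]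

theorem ι_tmul_mul_ι_tmul (a b : A) (x y : g) :
    ι ℂ (a ⊗ₜ[ℂ] x) * ι ℂ (b ⊗ₜ[ℂ] y) =
      ι ℂ (b ⊗ₜ[ℂ] y) * ι ℂ (a ⊗ₜ[ℂ] x) + ι ℂ ((a * b) ⊗ₜ[ℂ] ⁅x, y⁆) := by
  rw [ι_mul_ι, LieAlgebra.ExtendScalars.bracket_tmul]

theorem ι_tmul_mul_ι_tmul_of_lie_eq_smul {x y : g} {c : ℂ} (h : ⁅x, y⁆ = c • x) (a : A) :
    ι ℂ ((1 : A) ⊗ₜ[ℂ] x) * ι ℂ (a ⊗ₜ[ℂ] y) =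
      ι ℂ (a ⊗ₜ[ℂ] y) * ι ℂ ((1 : A) ⊗ₜ[ℂ] x) + c • ι ℂ (a ⊗ₜ[ℂ] x) := by
  rw [ι_tmul_mul_ι_tmul, one_mul, h, tmul_smul, map_smul]

local notation "𝓤" => UniversalEnvelopingAlgebra ℂ (A ⊗[ℂ] g)

theorem pow_succ_mul_ι_tmul_mem {I : Submodule 𝓤 𝓤} {e f h y : g} {c : ℂ}
    (hef : ⁅e, f⁆ = h) (hfh : ⁅f, h⁆ = (2 : ℂ) • f) (hfy : ⁅f, y⁆ = c • f)
    (a : A) {k : ℕ} (he : ι ℂ (a ⊗ₜ[ℂ] e) ∈ I) (hf : ι ℂ ((1 : A) ⊗ₜ[ℂ] f) ^ (k + 1) ∈ I) :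
    ι ℂ ((1 : A) ⊗ₜ[ℂ] f) ^ (k + 1) * ι ℂ (a ⊗ₜ[ℂ] y) ∈ I := by
  have hff : Commute (ι ℂ ((1 : A) ⊗ₜ[ℂ] f)) (ι ℂ (a ⊗ₜ[ℂ] f)) := by
    rw [commute_iff_eq, ι_tmul_mul_ι_tmul, lie_self, tmul_zero, map_zero, add_zero]
  have hmem : ι ℂ (a ⊗ₜ[ℂ] f) * ι ℂ ((1 : A) ⊗ₜ[ℂ] f) ^ k ∈ I := by
    refine mul_pow_mem_of_pow_succ_mem (K := ℂ) I (h := ι ℂ (a ⊗ₜ[ℂ] h)) ?_ ?_ hff he hf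
    · rw [ι_tmul_mul_ι_tmul, mul_one, hef]
    · rw [ι_tmul_mul_ι_tmul_of_lie_eq_smul hfh, ofNat_smul_eq_nsmul]
  rw [pow_succ_mul_eq_of_mul_eq_add (ι_tmul_mul_ι_tmul_of_lie_eq_smul hfy a) (hff.smul_right c),
    smul_mul_assoc]
  exact add_mem (I.smul_mem _ hf) (I.smul_of_tower_mem _ (I.smul_of_tower_mem c hmem))

section WeylIdeal

variable {H npos : LieSubalgebra ℂ g} {lam : Module.Dual ℂ H} {n : ℕ} {xm : Fin n → g}
  {m : Fin n → ℕ}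

theorem ι_tmul_mem_weylIdeal {x : g} (hx : x ∈ npos) (a : A) :
    ι ℂ (a ⊗ₜ[ℂ] x) ∈ weylIdeal A H npos lam xm m :=
  Submodule.subset_span (.inl (.inl ⟨x, hx, a, rfl⟩))

theorem ι_tmul_pow_mem_weylIdeal (i : Fin n) :
    ι ℂ ((1 : A) ⊗ₜ[ℂ] xm i) ^ (m i + 1) ∈ weylIdeal A H npos lam xm m :=
  Submodule.subset_span (.inr ⟨i, rfl⟩)

theorem ι_tmul_mul_ι_tmul_mem_weylIdeal {x y : g} (hx : x ∈ npos) (hxy : ⁅x, y⁆ ∈ npos)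
    (b a : A) : ι ℂ (b ⊗ₜ[ℂ] x) * ι ℂ (a ⊗ₜ[ℂ] y) ∈ weylIdeal A H npos lam xm m := by
  rw [ι_tmul_mul_ι_tmul]
  exact add_mem (Submodule.smul_mem _ _ (ι_tmul_mem_weylIdeal hx b))
    (ι_tmul_mem_weylIdeal hxy _)

theorem ι_tmul_sub_algebraMap_mul_ι_tmul_mem_weylIdeal [IsLieAbelian H] (h' h : H) (a : A) :
    (ι ℂ ((1 : A) ⊗ₜ[ℂ] (h' : g)) - algebraMap ℂ 𝓤 (lam h')) * ι ℂ (a ⊗ₜ[ℂ] (h : g)) ∈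
      weylIdeal A H npos lam xm m := by
  have hcomm : Commute (ι ℂ ((1 : A) ⊗ₜ[ℂ] (h' : g))) (ι ℂ (a ⊗ₜ[ℂ] (h : g))) := by
    rw [commute_iff_eq, ι_tmul_mul_ι_tmul, ← LieSubalgebra.coe_bracket, trivial_lie_zero,
      ZeroMemClass.coe_zero, tmul_zero, map_zero, add_zero]
  rw [(hcomm.sub_left (Algebra.commutes _ _)).eq]
  exact Submodule.smul_mem _ _ (Submodule.subset_span (.inl (.inr ⟨h', rfl⟩)))

end WeylIdeal

end CurrentAlgebra

theorem stmt12_general (g : Type*) [LieRing g] [LieAlgebra ℂ g]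
    [FiniteDimensional ℂ g] [LieAlgebra.IsSimple ℂ g]
    (A : Type*) [CommRing A] [Algebra ℂ A]
    (H : LieSubalgebra ℂ g) [H.IsCartanSubalgebra]
    (npos : LieSubalgebra ℂ g) (n : ℕ)
    (xp xm : Fin n → g) (hc : Fin n → H)
    (α : Fin n → Module.Dual ℂ H)
    (hxp : ∀ i, xp i ∈ npos)
    (hef : ∀ i, ⁅xp i, xm i⁆ = (hc i : g))
    (hhe : ∀ i (h : H), ⁅(h : g), xp i⁆ = α i h • xp i)
    (hhf : ∀ i (h : H), ⁅(h : g), xm i⁆ = -(α i h • xm i))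
    (hα2 : ∀ i, α i (hc i) = 2)
    (hgenp : npos = LieSubalgebra.lieSpan ℂ g (Set.range xp))
    (lam : Module.Dual ℂ H) (m : Fin n → ℕ) :
    ∀ (h : H) (a : A) (u : UniversalEnvelopingAlgebra ℂ (A ⊗[ℂ] g)),
      u ∈ weylIdeal A H npos lam xm m →
      u * UniversalEnvelopingAlgebra.ι ℂ (a ⊗ₜ[ℂ] (h : g)) ∈ weylIdeal A H npos lam xm m := by
  intro h a u hu
  have hstab : ∀ x ∈ npos, ⁅x, (h : g)⁆ ∈ npos := by
    subst hgenp
    intro x hx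
    rw [← neg_mem_iff, lie_skew]
    refine LieSubalgebra.lie_mem_lieSpan ?_ hx
    rintro _ ⟨i, rfl⟩
    exact hhe i h ▸ SMulMemClass.smul_mem _ (LieSubalgebra.subset_lieSpan ⟨i, rfl⟩)
  have hxm_lie : ∀ i (h : H), ⁅xm i, (h : g)⁆ = α i h • xm i := fun i h ↦ by
    rw [← lie_skew, hhf, neg_neg]
  refine Submodule.mul_mem_span_of_forall_mul_mem ?_ hu
  rintro _ ((⟨x, hx, b, rfl⟩ | ⟨h', rfl⟩) | ⟨i, rfl⟩)
  · exact ι_tmul_mul_ι_tmul_mem_weylIdeal hx (hstab x hx) b a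
  · exact ι_tmul_sub_algebraMap_mul_ι_tmul_mem_weylIdeal h' h a
  · exact pow_succ_mul_ι_tmul_mem (hef i) (hα2 i ▸ hxm_lie i (hc i)) (hxm_lie i h) a
      (ι_tmul_mem_weylIdeal (hxp i) a) (ι_tmul_pow_mem_weylIdeal i)

/-- Well-definedness of the right action of `U(h ⊗ A)` on the global Weyl module
`W_A(λ) = U(g ⊗ A)/I_λ`: for `h` in the Cartan subalgebra and `a ∈ A`, right
multiplication by `ι(h ⊗ a)` preserves the left ideal of relations `I_λ`, hence
`(u w_λ)·(h ⊗ a) := u (h ⊗ a) w_λ` is a well-defined right `U(h ⊗ A)`-module structure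
on `W_A(λ)`, which commutes with the left `g ⊗ A`-action since it is induced by right
multiplication. -/
theorem stmt12 (g : Type*) [LieRing g] [LieAlgebra ℂ g]
    [FiniteDimensional ℂ g] [LieAlgebra.IsSimple ℂ g]
    (A : Type*) [CommRing A] [Algebra ℂ A]
    (H : LieSubalgebra ℂ g) [H.IsCartanSubalgebra]
    (npos nneg : LieSubalgebra ℂ g) (n : ℕ)
    (xp xm : Fin n → g) (hc : Fin n → H)
    (α : Fin n → Module.Dual ℂ H) (hαind : LinearIndependent ℂ α)
    (hxp : ∀ i, xp i ∈ npos) (hxm : ∀ i, xm i ∈ nneg)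
    (hef : ∀ i, ⁅xp i, xm i⁆ = (hc i : g))
    (hhe : ∀ i (h : H), ⁅(h : g), xp i⁆ = α i h • xp i)
    (hhf : ∀ i (h : H), ⁅(h : g), xm i⁆ = -(α i h • xm i))
    (hα2 : ∀ i, α i (hc i) = 2)
    (hgenp : npos = LieSubalgebra.lieSpan ℂ g (Set.range xp))
    (hgenm : nneg = LieSubalgebra.lieSpan ℂ g (Set.range xm))
    (hdec : nneg.toSubmodule ⊔ H.toSubmodule ⊔ npos.toSubmodule = ⊤)
    (lam : Module.Dual ℂ H) (m : Fin n → ℕ) (hm : ∀ i, lam (hc i) = (m i : ℂ)) :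
    ∀ (h : H) (a : A) (u : UniversalEnvelopingAlgebra ℂ (A ⊗[ℂ] g)),
      u ∈ weylIdeal A H npos lam xm m →
      u * UniversalEnvelopingAlgebra.ι ℂ (a ⊗ₜ[ℂ] (h : g)) ∈ weylIdeal A H npos lam xm m :=
  stmt12_general g A H npos n xp xm hc α hxp hef hhe hhf hα2 hgenp lam m
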